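/- Let 1 ≤ m ≤ n and ∅ ≠ A ⊆ [m], and let f : 𝔽₂ⁿ → 𝔽₂ be defined by f(x) = 1 if and only if supp(x) is nonempty and supp(x) ⊆ A. Then the codewords of C_f satisfy: wt(c_f(0,0)) = 0; wt(c_f(0,u)) = 2^{n−1} for all u ≠ 0; wt(c_f(1,0)) = 2^{|A|} − 1; and for u ≠ 0, wt(c_f(1,u)) = 2^{n−1} − 1 + 2^{|A|} if supp(u) ∩ A = ∅ and wt(c_f(1,u)) = 2^{n−1} − 1 otherwise. Consequently, among the pairs (1,u) with u ≠ 0, exactly 2^{n−|A|} − 1 give weight 2^{n−1} − 1 + 2^{|A|} and exactly 2ⁿ − 2^{n−|A|} give weight 2^{n−1} − 1. -/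

import Mathlib

open Finset

/-- The order relation of the hierarchical poset `ℍ(m,n)` on `Fin n`:
`i ⪯ j` iff `i = j`, or `i` lies in the bottom level `[m]` and `j` in the top level. -/
def Hle (n m : ℕ) (i j : Fin n) : Prop :=
  i = j ∨ ((i : ℕ) < m ∧ m ≤ (j : ℕ))

instance (n m : ℕ) : DecidableRel (Hle n m) := fun i j =>
  decidable_of_iff (i = j ∨ ((i : ℕ) < m ∧ m ≤ (j : ℕ))) Iff.rfl

/-- Down-closed subsets of the hierarchical poset `ℍ(m,n)`. -/
def HDownClosed (n m : ℕ) (S : Finset (Fin n)) : Prop :=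
  ∀ i j : Fin n, Hle n m i j → j ∈ S → i ∈ S

instance (n m : ℕ) : DecidablePred (HDownClosed n m) := fun S =>
  decidable_of_iff (∀ i j : Fin n, Hle n m i j → j ∈ S → i ∈ S) Iff.rfl

/-- The bottom level `[m]` of `ℍ(m,n)`, viewed inside `Fin n`. -/
def lowSet (n m : ℕ) : Finset (Fin n) :=
  Finset.univ.filter (fun i => (i : ℕ) < m)

/-- The support of a vector of `𝔽₂ⁿ`, as a subset of `[n]`. -/
def supp {n : ℕ} (x : Fin n → ZMod 2) : Finset (Fin n) :=
  Finset.univ.filter (fun i => x i ≠ 0)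

/-- The standard inner product on `𝔽₂ⁿ`. -/
def ip {n : ℕ} (u x : Fin n → ZMod 2) : ZMod 2 := ∑ i, u i * x i

/-- The Hamming weight of the codeword `c_{D,u} = (u·x)_{x ∈ D}`. -/
def wtD {n : ℕ} (D : Finset (Fin n → ZMod 2)) (u : Fin n → ZMod 2) : ℕ :=
  (D.filter (fun x => ip u x = 1)).card

/-- The Hamming weight of the codeword `c_f(s,u) = (s·f(x) + u·x)_{x ∈ 𝔽₂ⁿ ∖ {0}}`. -/
def wtF {n : ℕ} (f : (Fin n → ZMod 2) → ZMod 2) (s : ZMod 2) (u : Fin n → ZMod 2) : ℕ :=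
  (Finset.univ.filter (fun x : Fin n → ZMod 2 => x ≠ 0 ∧ s * f x + ip u x = 1)).card

/-- The Hamming weight of the first `m` coordinates of `u` (the part `v` of `u = (v,w)`). -/
def wtLow (n m : ℕ) (u : Fin n → ZMod 2) : ℕ :=
  (Finset.univ.filter (fun i : Fin n => (i : ℕ) < m ∧ u i ≠ 0)).card

/-! Over `𝔽₂`, `f x + u·x = 1` holds exactly on the symmetric difference of `{f = 1}`, the
`2^|A| - 1` nonzero vectors supported in `A`, and `{u·x = 1}`, which has `2^(n-1)` elements when
`u ≠ 0`. The intersection of the two sets is empty when `supp u` misses `A`; otherwise it is half of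
the subcube `{supp x ⊆ A}`, since adding the unit vector `e_i` for some `i ∈ supp u ∩ A` is an
involution of that subcube exchanging `u·x = 0` and `u·x = 1`. The frequencies then count the `u`
supported in the complement of `A`. -/

lemma ZMod.two_eq_zero_or_eq_one : ∀ a : ZMod 2, a = 0 ∨ a = 1 := by decide

lemma card_filter_add_eq_one_add_two_mul {α : Type*} [Fintype α] (g h : α → ZMod 2) :
    #{x | g x + h x = 1} + 2 * #{x | g x = 1 ∧ h x = 1} = #{x | g x = 1} + #{x | h x = 1} := by
  simp only [card_filter, mul_sum, ← sum_add_distrib]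
  refine sum_congr rfl fun x _ => ?_
  generalize g x = a, h x = b
  revert a b
  decide

lemma card_filter_ne_and {α : Type*} [Fintype α] [DecidableEq α] (a : α) {P : α → Prop}
    [DecidablePred P] (ha : P a) : #{x | x ≠ a ∧ P x} = #{x | P x} - 1 := by
  rw [← card_erase_of_mem (mem_filter.2 ⟨mem_univ a, ha⟩)]
  congr 1
  ext x
  simp [and_comm]

lemma card_filter_and_eq_zero_add_card_filter_and_eq_one {α : Type*} [Fintype α] (P : α → Prop)
    [DecidablePred P] (g : α → ZMod 2) :
    #{x | P x ∧ g x = 0} + #{x | P x ∧ g x = 1} = #{x | P x} := by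
  classical
  rw [← card_union_of_disjoint (disjoint_filter.2 fun x _ h0 h1 => by simp_all), ← filter_or]
  congr 1
  ext x
  rcases ZMod.two_eq_zero_or_eq_one (g x) with h | h <;> simp [h]

section

variable {n : ℕ}

lemma mem_supp {x : Fin n → ZMod 2} {i : Fin n} : i ∈ supp x ↔ x i ≠ 0 := by
  simp [supp]

@[simp]
lemma supp_eq_empty {x : Fin n → ZMod 2} : supp x = ∅ ↔ x = 0 := by
  simp [supp, eq_empty_iff_forall_notMem, funext_iff]

def suppEquiv : (Fin n → ZMod 2) ≃ Finset (Fin n) where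
  toFun := supp
  invFun S i := if i ∈ S then 1 else 0
  left_inv x := by
    funext i
    rcases ZMod.two_eq_zero_or_eq_one (x i) with h | h <;> simp [mem_supp, h]
  right_inv S := by
    ext i
    by_cases h : i ∈ S <;> simp [mem_supp, h]

lemma card_filter_supp_subset (S : Finset (Fin n)) :
    #{x : Fin n → ZMod 2 | supp x ⊆ S} = 2 ^ #S := by
  rw [← card_powerset, ← card_map suppEquiv.toEmbedding]
  congr 1
  ext T
  simp only [mem_map_equiv, mem_filter, mem_univ, true_and, mem_powerset]
  exact iff_of_eq (congrArg (· ⊆ S) (suppEquiv.apply_symm_apply T))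

lemma card_filter_ne_zero_supp_subset (S : Finset (Fin n)) :
    #{x : Fin n → ZMod 2 | x ≠ 0 ∧ supp x ⊆ S} = 2 ^ #S - 1 := by
  rw [card_filter_ne_and 0 (by simp [supp]), card_filter_supp_subset]

@[simp]
lemma ip_zero_left (x : Fin n → ZMod 2) : ip 0 x = 0 := by simp [ip]

@[simp]
lemma ip_zero_right (u : Fin n → ZMod 2) : ip u 0 = 0 := by simp [ip]

lemma ip_add_single_one (u x : Fin n → ZMod 2) (i : Fin n) :
    ip u (x + Pi.single i 1) = ip u x + u i := by
  simp [ip, mul_add, sum_add_distrib, Pi.single_apply]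

lemma ip_eq_zero_of_disjoint {u x : Fin n → ZMod 2} (h : Disjoint (supp u) (supp x)) :
    ip u x = 0 :=
  sum_eq_zero fun i _ => by
    by_cases hu : u i = 0
    · simp [hu]
    · have hx : x i = 0 := by simpa [mem_supp] using disjoint_left.1 h (mem_supp.2 hu)
      simp [hx]

lemma card_filter_supp_subset_ip_eq_one {S : Finset (Fin n)} {u : Fin n → ZMod 2} {i : Fin n}
    (hi : i ∈ S) (hu : u i ≠ 0) :
    #{x | supp x ⊆ S ∧ ip u x = 1} = 2 ^ (#S - 1) := by
  have hui : u i = 1 := (ZMod.two_eq_zero_or_eq_one _).resolve_left hu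
  let flip : (Fin n → ZMod 2) → (Fin n → ZMod 2) := (· + Pi.single i 1)
  have flip_flip : ∀ x, flip (flip x) = x := fun x => by
    simp [flip, add_assoc, ← Pi.single_add, CharTwo.add_self_eq_zero]
  have ip_flip : ∀ x, ip u (flip x) = ip u x + 1 := fun x => by
    rw [ip_add_single_one, hui]
  have supp_flip : ∀ x, supp x ⊆ S → supp (flip x) ⊆ S := fun x hxS j hj => by
    by_cases hji : j = i
    · exact hji ▸ hi
    · exact hxS (by simpa [mem_supp, flip, Pi.single_eq_of_ne hji] using hj)
  have halves : #{x | supp x ⊆ S ∧ ip u x = 0} = #{x | supp x ⊆ S ∧ ip u x = 1} := by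
    refine card_nbij' flip flip (fun x hx => ?_) (fun x hx => ?_)
      (fun x _ => flip_flip x) (fun x _ => flip_flip x) <;>
    · simp only [coe_filter, mem_univ, true_and, Set.mem_ofPred_eq, ip_flip] at hx ⊢
      exact ⟨supp_flip x hx.1, by rw [hx.2]; decide⟩
  have total := card_filter_and_eq_zero_add_card_filter_and_eq_one (supp · ⊆ S) (ip u)
  rw [card_filter_supp_subset, halves] at total
  have hS : #S = #S - 1 + 1 := (Nat.succ_pred_eq_of_pos (card_pos.2 ⟨i, hi⟩)).symm
  rw [hS, pow_succ] at total
  omega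

lemma card_filter_ip_eq_one {u : Fin n → ZMod 2} (hu : u ≠ 0) :
    #{x | ip u x = 1} = 2 ^ (n - 1) := by
  obtain ⟨i, hi⟩ := Function.ne_iff.1 hu
  simpa using card_filter_supp_subset_ip_eq_one (mem_univ i) hi

lemma wtF_eq_card {f : (Fin n → ZMod 2) → ZMod 2} (hf0 : f 0 = 0) (s : ZMod 2)
    (u : Fin n → ZMod 2) : wtF f s u = #{x | s * f x + ip u x = 1} := by
  refine congrArg card (filter_congr fun x _ => and_iff_right_of_imp ?_)
  rintro h rfl
  simp [hf0] at h

def IsIndicatorOfNonemptySubsets (A : Finset (Fin n)) (f : (Fin n → ZMod 2) → ZMod 2) : Prop :=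
  ∀ x, f x = 1 ↔ (supp x).Nonempty ∧ supp x ⊆ A

variable {A : Finset (Fin n)} {f : (Fin n → ZMod 2) → ZMod 2}

lemma IsIndicatorOfNonemptySubsets.eq_one_iff (hf : IsIndicatorOfNonemptySubsets A f)
    (x : Fin n → ZMod 2) : f x = 1 ↔ x ≠ 0 ∧ supp x ⊆ A := by
  rw [hf, nonempty_iff_ne_empty, Ne, supp_eq_empty]

lemma IsIndicatorOfNonemptySubsets.map_zero (hf : IsIndicatorOfNonemptySubsets A f) : f 0 = 0 :=
  (ZMod.two_eq_zero_or_eq_one _).resolve_right fun h => ((hf.eq_one_iff 0).1 h).1 rfl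

lemma wtF_one_zero (hf : IsIndicatorOfNonemptySubsets A f) : wtF f 1 0 = 2 ^ #A - 1 := by
  rw [wtF_eq_card hf.map_zero, ← card_filter_ne_zero_supp_subset A]
  simp [hf.eq_one_iff]

lemma wtF_one_add_two_mul (hf : IsIndicatorOfNonemptySubsets A f) {u : Fin n → ZMod 2}
    (hu : u ≠ 0) :
    wtF f 1 u + 2 * #{x | supp x ⊆ A ∧ ip u x = 1} = 2 ^ (n - 1) + (2 ^ #A - 1) := by
  have hfu : #{x | f x = 1 ∧ ip u x = 1} = #{x | supp x ⊆ A ∧ ip u x = 1} := by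
    refine congrArg card (filter_congr fun x _ => ?_)
    rw [hf.eq_one_iff]
    constructor
    · exact fun h => ⟨h.1.2, h.2⟩
    · rintro ⟨hA, hu⟩
      exact ⟨⟨by rintro rfl; simp at hu, hA⟩, hu⟩
  rw [wtF_eq_card hf.map_zero, ← hfu]
  simp only [one_mul]
  rw [card_filter_add_eq_one_add_two_mul, card_filter_ip_eq_one hu, ← wtF_one_zero hf,
    wtF_eq_card hf.map_zero]
  simp [add_comm]

lemma wtF_one_of_disjoint (hf : IsIndicatorOfNonemptySubsets A f) {u : Fin n → ZMod 2}
    (hu : u ≠ 0) (hd : Disjoint (supp u) A) : wtF f 1 u = 2 ^ (n - 1) - 1 + 2 ^ #A := by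
  have hcount : #{x | supp x ⊆ A ∧ ip u x = 1} = 0 :=
    card_eq_zero.2 <| filter_eq_empty_iff.2 fun x _ ⟨hxA, hx⟩ => by
      simp [ip_eq_zero_of_disjoint (hd.mono_right hxA)] at hx
  have := wtF_one_add_two_mul hf hu
  have : 0 < 2 ^ (n - 1) := by positivity
  have : 0 < 2 ^ #A := by positivity
  omega

lemma wtF_one_of_not_disjoint (hf : IsIndicatorOfNonemptySubsets A f) {u : Fin n → ZMod 2}
    (hu : u ≠ 0) (hd : ¬Disjoint (supp u) A) : wtF f 1 u = 2 ^ (n - 1) - 1 := by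
  obtain ⟨i, hiu, hiA⟩ := not_disjoint_iff.1 hd
  have hcount := card_filter_supp_subset_ip_eq_one hiA (mem_supp.1 hiu)
  have := wtF_one_add_two_mul hf hu
  have hA : 2 ^ #A = 2 * 2 ^ (#A - 1) := by
    rw [← pow_succ', Nat.sub_add_cancel (card_pos.2 ⟨i, hiA⟩)]
  have : 0 < 2 ^ (#A - 1) := by positivity
  omega

lemma card_filter_ne_zero_disjoint (A : Finset (Fin n)) :
    #{u : Fin n → ZMod 2 | u ≠ 0 ∧ Disjoint (supp u) A} = 2 ^ (n - #A) - 1 := by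
  simp_rw [← subset_compl_iff_disjoint_right]
  rw [card_filter_ne_zero_supp_subset, card_compl, Fintype.card_fin]

lemma card_filter_not_disjoint (A : Finset (Fin n)) :
    #{u : Fin n → ZMod 2 | ¬Disjoint (supp u) A} = 2 ^ n - 2 ^ (n - #A) := by
  have hsplit :=
    card_filter_add_card_filter_not (s := univ) (fun u : Fin n → ZMod 2 => Disjoint (supp u) A)
  simp_rw [← subset_compl_iff_disjoint_right] at hsplit ⊢
  rw [card_filter_supp_subset, card_compl, card_univ, Fintype.card_fun, ZMod.card,
    Fintype.card_fin] at hsplit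
  omega

lemma card_filter_wtF_one_eq_add_two_pow_card (hf : IsIndicatorOfNonemptySubsets A f) :
    #{u | u ≠ 0 ∧ wtF f 1 u = 2 ^ (n - 1) - 1 + 2 ^ #A} = 2 ^ (n - #A) - 1 := by
  rw [← card_filter_ne_zero_disjoint A]
  refine congrArg card (filter_congr fun u _ => and_congr_right fun hu => ?_)
  by_cases hd : Disjoint (supp u) A
  · simp [hd, wtF_one_of_disjoint hf hu hd]
  · simp [hd, wtF_one_of_not_disjoint hf hu hd]

lemma card_filter_wtF_one_eq_two_pow_sub_one (hf : IsIndicatorOfNonemptySubsets A f) :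
    #{u | u ≠ 0 ∧ wtF f 1 u = 2 ^ (n - 1) - 1} = 2 ^ n - 2 ^ (n - #A) := by
  rw [← card_filter_not_disjoint A]
  refine congrArg card (filter_congr fun u _ => ?_)
  by_cases hd : Disjoint (supp u) A
  · simp only [hd, not_true, iff_false, not_and]
    intro hu
    rw [wtF_one_of_disjoint hf hu hd]
    have : 0 < 2 ^ #A := by positivity
    omega
  · have hu : u ≠ 0 := by rintro rfl; simp [supp] at hd
    simp [hd, hu, wtF_one_of_not_disjoint hf hu hd]

end

theorem stmt_8_general (n : ℕ)
    (A : Finset (Fin n))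
    (f : (Fin n → ZMod 2) → ZMod 2)
    (hf : ∀ x, f x = 1 ↔ ((supp x).Nonempty ∧ supp x ⊆ A)) :
    wtF f 0 0 = 0
    ∧ (∀ u : Fin n → ZMod 2, u ≠ 0 → wtF f 0 u = 2 ^ (n - 1))
    ∧ wtF f 1 0 = 2 ^ A.card - 1
    ∧ (∀ u : Fin n → ZMod 2, u ≠ 0 →
        (supp u ∩ A = ∅ → wtF f 1 u = 2 ^ (n - 1) - 1 + 2 ^ A.card) ∧
        (supp u ∩ A ≠ ∅ → wtF f 1 u = 2 ^ (n - 1) - 1))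
    ∧ (Finset.univ.filter (fun u : Fin n → ZMod 2 =>
        u ≠ 0 ∧ wtF f 1 u = 2 ^ (n - 1) - 1 + 2 ^ A.card)).card = 2 ^ (n - A.card) - 1
    ∧ (Finset.univ.filter (fun u : Fin n → ZMod 2 =>
        u ≠ 0 ∧ wtF f 1 u = 2 ^ (n - 1) - 1)).card = 2 ^ n - 2 ^ (n - A.card) := by
  replace hf : IsIndicatorOfNonemptySubsets A f := hf
  have hf0 := hf.map_zero
  refine ⟨by simp [wtF_eq_card hf0], fun u hu => ?_, wtF_one_zero hf, fun u hu => ⟨?_, ?_⟩,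
    card_filter_wtF_one_eq_add_two_pow_card hf, card_filter_wtF_one_eq_two_pow_sub_one hf⟩
  · simpa [wtF_eq_card hf0] using card_filter_ip_eq_one hu
  · exact fun hd => wtF_one_of_disjoint hf hu (disjoint_iff_inter_eq_empty.2 hd)
  · exact fun hd => wtF_one_of_not_disjoint hf hu (mt disjoint_iff_inter_eq_empty.1 hd)

/-- **Theorem 5.5(1).**  Let `∅ ≠ A ⊆ [m]` and let `f` be the indicator of the
nonempty subsets of `A` (the nonempty down-closed subsets of `ℍ(m,n)` contained
in `A`).  Then the weights of the codewords `c_f(s,u)` of `C_f` are: `0` for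
`(0,0)`; `2^{n−1}` for `(0,u)`, `u ≠ 0`; `2^{|A|} − 1` for `(1,0)`; and for
`u ≠ 0`, `2^{n−1} − 1 + 2^{|A|}` if `supp(u) ∩ A = ∅` and `2^{n−1} − 1` otherwise,
with frequencies `2^{n−|A|} − 1` and `2ⁿ − 2^{n−|A|}` respectively. -/
theorem stmt_8 (n m : ℕ) (hm : 1 ≤ m) (hmn : m ≤ n)
    (A : Finset (Fin n)) (hAne : A.Nonempty) (hA : ∀ i ∈ A, (i : ℕ) < m)
    (f : (Fin n → ZMod 2) → ZMod 2)
    (hf : ∀ x, f x = 1 ↔ ((supp x).Nonempty ∧ supp x ⊆ A)) :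
    wtF f 0 0 = 0
    ∧ (∀ u : Fin n → ZMod 2, u ≠ 0 → wtF f 0 u = 2 ^ (n - 1))
    ∧ wtF f 1 0 = 2 ^ A.card - 1
    ∧ (∀ u : Fin n → ZMod 2, u ≠ 0 →
        (supp u ∩ A = ∅ → wtF f 1 u = 2 ^ (n - 1) - 1 + 2 ^ A.card) ∧
        (supp u ∩ A ≠ ∅ → wtF f 1 u = 2 ^ (n - 1) - 1))
    ∧ (Finset.univ.filter (fun u : Fin n → ZMod 2 =>
        u ≠ 0 ∧ wtF f 1 u = 2 ^ (n - 1) - 1 + 2 ^ A.card)).card = 2 ^ (n - A.card) - 1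
    ∧ (Finset.univ.filter (fun u : Fin n → ZMod 2 =>
        u ≠ 0 ∧ wtF f 1 u = 2 ^ (n - 1) - 1)).card = 2 ^ n - 2 ^ (n - A.card) :=
  stmt_8_general n A f hf
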